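/- arXiv:1112.3864 — 2 statements merged into one kernel-verified Lean document; each statement's English description precedes it below -/
import Mathlib

section
/- Let A and B be algebras with Con(A × B) modular. If α is a dense congruence on A, then α × 1_B is a dense congruence on A × B. -/
/-- An algebraic signature: a type of operation symbols with finite arities. -/
structure Signature where
  ops : Type
  arity : ops → ℕ

/-- An algebra for a signature. -/
structure SAlgebra (S : Signature) where
  carrier : Type
  interp : (o : S.ops) → (Fin (S.arity o) → carrier) → carrier

namespace SAlgebra

variable {S : Signature}

/-- Binary product of algebras. -/
def prod (A B : SAlgebra S) : SAlgebra S where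
  carrier := A.carrier × B.carrier
  interp o x := (A.interp o fun i => (x i).1, B.interp o fun i => (x i).2)

/-- Product of a family of algebras. -/
def pi {ι : Type} (A : ι → SAlgebra S) : SAlgebra S where
  carrier := ∀ i, (A i).carrier
  interp o x i := (A i).interp o fun j => x j i

end SAlgebra

/-- Homomorphisms of algebras. -/
structure SHom {S : Signature} (A B : SAlgebra S) where
  toFun : A.carrier → B.carrier
  map : ∀ (o : S.ops) (x : Fin (S.arity o) → A.carrier),
    toFun (A.interp o x) = B.interp o fun i => toFun (x i)

namespace SHom

variable {S : Signature}

/-- Composition of homomorphisms. -/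
def comp {A B C : SAlgebra S} (g : SHom B C) (f : SHom A B) : SHom A C where
  toFun := g.toFun ∘ f.toFun
  map o x := by simp [Function.comp, f.map, g.map]

/-- The `i`-th projection of a product. -/
def proj {ι : Type} (A : ι → SAlgebra S) (i : ι) : SHom (SAlgebra.pi A) (A i) where
  toFun x := x i
  map _ _ := rfl

end SHom

/-- Congruences of an algebra. -/
structure SCon {S : Signature} (A : SAlgebra S) where
  r : A.carrier → A.carrier → Prop
  iseqv : Equivalence r
  compat : ∀ (o : S.ops) (x y : Fin (S.arity o) → A.carrier),
    (∀ i, r (x i) (y i)) → r (A.interp o x) (A.interp o y)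

namespace SCon

variable {S : Signature} {A : SAlgebra S}

instance : PartialOrder (SCon A) where
  le c d := ∀ x y, c.r x y → d.r x y
  le_refl _ _ _ h := h
  le_trans _ _ _ h h' x y hx := h' x y (h x y hx)
  le_antisymm a b h h' := by
    cases a; cases b
    have : ∀ x y : A.carrier, _ ↔ _ := fun x y => Iff.intro (h x y) (h' x y)
    simp only [SCon.mk.injEq]
    funext x y
    exact propext (this x y)

instance : InfSet (SCon A) :=
  ⟨fun s =>
    { r := fun x y => ∀ c ∈ s, c.r x y
      iseqv := ⟨fun x c _ => c.iseqv.refl x, fun h c hc => c.iseqv.symm (h c hc),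
        fun h1 h2 c hc => c.iseqv.trans (h1 c hc) (h2 c hc)⟩
      compat := fun o x y h c hc => c.compat o x y fun i => h i c hc }⟩

instance : CompleteLattice (SCon A) :=
  completeLatticeOfInf _ (fun s =>
    ⟨fun c hc x y h => h c hc, fun b hb x y h c hc => hb hc x y h⟩)

/-- Restriction (inverse image) of a congruence along a homomorphism. -/
def comap {B : SAlgebra S} (f : SHom A B) (θ : SCon B) : SCon A where
  r x y := θ.r (f.toFun x) (f.toFun y)
  iseqv := ⟨fun _ => θ.iseqv.refl _, θ.iseqv.symm, θ.iseqv.trans⟩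
  compat o x y h := by
    show θ.r (f.toFun (A.interp o x)) (f.toFun (A.interp o y))
    rw [f.map, f.map]
    exact θ.compat o _ _ h

/-- Product of two congruences. -/
def prodCon {A B : SAlgebra S} (φ : SCon A) (ψ : SCon B) : SCon (A.prod B) where
  r x y := φ.r x.1 y.1 ∧ ψ.r x.2 y.2
  iseqv := ⟨fun _ => ⟨φ.iseqv.refl _, ψ.iseqv.refl _⟩,
    fun h => ⟨φ.iseqv.symm h.1, ψ.iseqv.symm h.2⟩,
    fun h h' => ⟨φ.iseqv.trans h.1 h'.1, ψ.iseqv.trans h.2 h'.2⟩⟩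
  compat o x y h := ⟨φ.compat o _ _ fun i => (h i).1, ψ.compat o _ _ fun i => (h i).2⟩

/-- Product of a family of congruences. -/
def piCon {ι : Type} {A : ι → SAlgebra S} (φ : ∀ i, SCon (A i)) : SCon (SAlgebra.pi A) where
  r x y := ∀ i, (φ i).r (x i) (y i)
  iseqv := ⟨fun _ i => (φ i).iseqv.refl _, fun h i => (φ i).iseqv.symm (h i),
    fun h h' i => (φ i).iseqv.trans (h i) (h' i)⟩
  compat o x y h i := (φ i).compat o _ _ fun j => h j i

end SCon

/-- Terms in `n` variables over a signature. -/
inductive STerm (S : Signature) : ℕ → Type where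
  | var : {n : ℕ} → Fin n → STerm S n
  | app : {n : ℕ} → (o : S.ops) → (Fin (S.arity o) → STerm S n) → STerm S n

/-- Evaluation of a term in an algebra. -/
def STerm.eval {S : Signature} (A : SAlgebra S) {n : ℕ} : STerm S n → (Fin n → A.carrier) → A.carrier
  | .var i, x => x i
  | .app o t, x => A.interp o fun j => (t j).eval A x

/-- The term-condition centralizer relation `C(α, β; δ)`. -/
def Centralizes {S : Signature} (A : SAlgebra S) (α β δ : SCon A) : Prop :=
  ∀ (n m : ℕ) (t : STerm S (n + m)) (a b : Fin n → A.carrier) (u v : Fin m → A.carrier),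
    (∀ i, α.r (a i) (b i)) → (∀ j, β.r (u j) (v j)) →
    δ.r (t.eval A (Fin.append a u)) (t.eval A (Fin.append a v)) →
    δ.r (t.eval A (Fin.append b u)) (t.eval A (Fin.append b v))

/-- The commutator `[α, β]`: the least congruence `δ` with `C(α, β; δ)`. -/
def conCommutator {S : Signature} (A : SAlgebra S) (α β : SCon A) : SCon A :=
  sInf {δ | Centralizes A α β δ}

/-- The center of an algebra: the largest central congruence. -/
def conCenter {S : Signature} (A : SAlgebra S) : SCon A :=
  sSup {θ | conCommutator A θ ⊤ = ⊥}

/-- A class of algebras is a variety iff it is closed under subalgebras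
(isomorphic copies included), homomorphic images and products. -/
def IsVariety {S : Signature} (V : SAlgebra S → Prop) : Prop :=
  (∀ (A B : SAlgebra S) (e : SHom A B), Function.Injective e.toFun → V B → V A) ∧
  (∀ (A B : SAlgebra S) (p : SHom A B), Function.Surjective p.toFun → V A → V B) ∧
  (∀ (ι : Type) (A : ι → SAlgebra S), (∀ i, V (A i)) → V (SAlgebra.pi A))

/-- A congruence modular variety. -/
def IsCongruenceModularVariety {S : Signature} (V : SAlgebra S → Prop) : Prop :=
  IsVariety V ∧ ∀ A : SAlgebra S, V A → IsModularLattice (SCon A)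

/-- A Gumm difference term for the class `V`:  `d(x,y,y) = x` holds identically,
and `d(x,x,y) = y` whenever `x θ y` for an abelian congruence `θ`. -/
def IsGummDifferenceTerm {S : Signature} (V : SAlgebra S → Prop) (d : STerm S 3) : Prop :=
  (∀ A : SAlgebra S, V A → ∀ x y : A.carrier, d.eval A ![x, y, y] = x) ∧
  (∀ A : SAlgebra S, V A → ∀ θ : SCon A, conCommutator A θ θ = ⊥ →
    ∀ x y : A.carrier, θ.r x y → d.eval A ![x, x, y] = y)

/-- `R` is an absolute retract in `V`: every embedding of `R` into a member of `V`
admits a retraction. -/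
def IsAbsoluteRetract {S : Signature} (V : SAlgebra S → Prop) (R : SAlgebra S) : Prop :=
  ∀ A : SAlgebra S, V A → ∀ e : SHom R A, Function.Injective e.toFun →
    ∃ p : SHom A R, ∀ x, p.toFun (e.toFun x) = x

/-- An embedding is essential iff every congruence of the codomain restricting
trivially is trivial. -/
def IsEssential {S : Signature} {A B : SAlgebra S} (e : SHom A B) : Prop :=
  ∀ θ : SCon B, SCon.comap e θ = ⊥ → θ = ⊥

/-- A congruence `α` is dense: any congruence meeting it trivially is trivial. -/
def DenseCon {S : Signature} {A : SAlgebra S} (α : SCon A) : Prop :=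
  ∀ θ : SCon A, θ ⊓ α = ⊥ → θ = ⊥

/-- The setoid underlying a congruence. -/
def SCon.setoid {S : Signature} {A : SAlgebra S} (θ : SCon A) : Setoid A.carrier :=
  ⟨θ.r, θ.iseqv⟩

/-- Quotient algebra. -/
noncomputable def SAlgebra.quot {S : Signature} (A : SAlgebra S) (θ : SCon A) : SAlgebra S where
  carrier := Quotient θ.setoid
  interp o x := Quotient.mk θ.setoid (A.interp o fun i => (x i).out)

theorem SCon.out_rel {S : Signature} {A : SAlgebra S} (θ : SCon A) (a : A.carrier) :
    θ.r (Quotient.out (Quotient.mk θ.setoid a)) a :=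
  @Quotient.exact _ θ.setoid _ _ (Quotient.out_eq _)

/-- The canonical quotient homomorphism. -/
def SHom.quotHom {S : Signature} (A : SAlgebra S) (θ : SCon A) : SHom A (A.quot θ) where
  toFun := Quotient.mk θ.setoid
  map o x := Quotient.sound (θ.compat o _ _ fun i => θ.iseqv.symm (θ.out_rel (x i)))

/-- Product map of a family of homomorphisms. -/
def SHom.piMap {S : Signature} {ι : Type} {A B : ι → SAlgebra S} (f : ∀ i, SHom (A i) (B i)) :
    SHom (SAlgebra.pi A) (SAlgebra.pi B) where
  toFun x i := (f i).toFun (x i)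
  map o x := funext fun i => (f i).map o fun j => x j i

/-- The congruence `φ/θ` on the quotient `A/θ`, for `θ ≤ φ`. -/
def SCon.quotCon {S : Signature} {A : SAlgebra S} (θ φ : SCon A) (h : θ ≤ φ) :
    SCon (A.quot θ) where
  r a b := φ.r a.out b.out
  iseqv := ⟨fun _ => φ.iseqv.refl _, φ.iseqv.symm, φ.iseqv.trans⟩
  compat o x y hxy := by
    have hx := h _ _ (θ.out_rel (A.interp o fun i => (x i).out))
    have hy := h _ _ (θ.out_rel (A.interp o fun i => (y i).out))
    exact φ.iseqv.trans hx (φ.iseqv.trans (φ.compat o _ _ hxy) (φ.iseqv.symm hy))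

/-- Finitely subdirectly irreducible: `⊥` is meet irreducible in the congruence lattice. -/
def IsFSI {S : Signature} (A : SAlgebra S) : Prop :=
  ∀ θ φ : SCon A, θ ⊓ φ = ⊥ → θ = ⊥ ∨ φ = ⊥

/-- Subdirectly irreducible: the congruence lattice has a monolith. -/
def IsSubdirectlyIrreducible {S : Signature} (A : SAlgebra S) : Prop :=
  ∃ μ : SCon A, μ ≠ ⊥ ∧ ∀ θ : SCon A, θ ≠ ⊥ → μ ≤ θ

/-!
With `η = 0_A × 1_B ≤ α × 1_B` and `θ ⊓ (α × 1_B) = 0`, the modular law gives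
`(η ⊔ θ) ⊓ (α × 1_B) = η`. Being above `η`, the join `η ⊔ θ` has the form `ψ × 1_B`, and then
`(ψ ⊓ α) × 1_B = 0_A × 1_B` forces `ψ ⊓ α = 0`, so `ψ = 0` by density of `α`. Hence `θ ≤ η ≤ α × 1_B`,
and `θ = θ ⊓ (α × 1_B) = 0`.
-/

namespace SCon

variable {S : Signature}

section

variable {A : SAlgebra S}

theorem r_top (x y : A.carrier) : (⊤ : SCon A).r x y :=
  fun _ hc => absurd hc (Set.notMem_empty _)

theorem r_inf_iff {φ ψ : SCon A} {x y : A.carrier} : (φ ⊓ ψ).r x y ↔ φ.r x y ∧ ψ.r x y :=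
  ⟨fun h => ⟨h φ (Set.mem_insert _ _), h ψ (Set.mem_insert_of_mem _ rfl)⟩,
    fun ⟨hφ, hψ⟩ _ hc => hc.elim (· ▸ hφ) (· ▸ hψ)⟩

end

variable {A B : SAlgebra S}

theorem prodCon_mono_left {φ φ' : SCon A} (h : φ ≤ φ') (ψ : SCon B) :
    prodCon φ ψ ≤ prodCon φ' ψ :=
  fun _ _ hxy => ⟨h _ _ hxy.1, hxy.2⟩

theorem prodCon_inf_prodCon (φ φ' : SCon A) (ψ ψ' : SCon B) :
    prodCon φ ψ ⊓ prodCon φ' ψ' = prodCon (φ ⊓ φ') (ψ ⊓ ψ') := by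
  refine le_antisymm (fun _ _ h => ?_) (fun _ _ h => ?_)
  · obtain ⟨⟨hφ, hψ⟩, hφ', hψ'⟩ := r_inf_iff.1 h
    exact ⟨r_inf_iff.2 ⟨hφ, hφ'⟩, r_inf_iff.2 ⟨hψ, hψ'⟩⟩
  · obtain ⟨⟨hφ, hφ'⟩, hψ, hψ'⟩ := And.imp r_inf_iff.1 r_inf_iff.1 h
    exact r_inf_iff.2 ⟨⟨hφ, hψ⟩, hφ', hψ'⟩

theorem prodCon_top_le_prodCon_top_iff [Nonempty B.carrier] {φ φ' : SCon A} :
    prodCon φ (⊤ : SCon B) ≤ prodCon φ' ⊤ ↔ φ ≤ φ' := by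
  obtain ⟨b⟩ := ‹Nonempty B.carrier›
  exact ⟨fun h x y hxy => (h (x, b) (y, b) ⟨hxy, r_top b b⟩).1, fun h => prodCon_mono_left h ⊤⟩

theorem exists_eq_prodCon_top_of_le {β : SCon (A.prod B)}
    (h : prodCon (⊥ : SCon A) (⊤ : SCon B) ≤ β) : ∃ ψ : SCon A, β = prodCon ψ ⊤ := by
  have change_snd : ∀ (a : A.carrier) (b b' : B.carrier), β.r (a, b) (a, b') :=
    fun a b b' => h _ _ ⟨(⊥ : SCon A).iseqv.refl a, r_top b b'⟩
  let ψ : SCon A :=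
    { r := fun a a' => ∀ b b', β.r (a, b) (a', b')
      iseqv := ⟨fun a => change_snd a, fun hr b b' => β.iseqv.symm (hr b' b),
        fun hr hr' b b' => β.iseqv.trans (hr b b) (hr' b b')⟩
      compat := fun o x y hr b b' =>
        β.iseqv.trans (change_snd _ b (B.interp o fun _ => b)) <|
          β.iseqv.trans (β.compat o (fun i => (x i, b)) (fun i => (y i, b')) fun i => hr i b b')
            (change_snd _ _ b') }
  refine ⟨ψ, le_antisymm (fun p q hpq => ⟨fun b b' => ?_, r_top _ _⟩) fun p q hpq => hpq.1 p.2 q.2⟩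
  exact β.iseqv.trans (change_snd _ b p.2) (β.iseqv.trans hpq (change_snd _ q.2 b'))

end SCon

/-- If `Con(A × B)` is modular and `α` is a dense congruence on `A`, then `α × 1_B`
is a dense congruence on `A × B`. -/
theorem prod_top_dense {S : Signature} (A B : SAlgebra S)
    (hmod : IsModularLattice (SCon (A.prod B)))
    (α : SCon A) (hα : DenseCon α) :
    DenseCon (SCon.prodCon α (⊤ : SCon B)) := by
  intro θ hθ
  rcases isEmpty_or_nonempty B.carrier with hB | hB
  · exact le_bot_iff.1 fun x _ _ => isEmptyElim x.2
  set η : SCon (A.prod B) := SCon.prodCon ⊥ ⊤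
  have hηα : η ≤ SCon.prodCon α ⊤ := SCon.prodCon_mono_left bot_le ⊤
  have hmodular : (η ⊔ θ) ⊓ SCon.prodCon α ⊤ = η := by
    rw [sup_inf_assoc_of_le θ hηα, hθ, sup_bot_eq]
  obtain ⟨ψ, hψ⟩ := SCon.exists_eq_prodCon_top_of_le (le_sup_left : η ≤ η ⊔ θ)
  have hψα : ψ ⊓ α = ⊥ := by
    have hprod := SCon.prodCon_inf_prodCon ψ α (⊤ : SCon B) ⊤
    rw [inf_idem, ← hψ, hmodular] at hprod
    exact le_bot_iff.1 (SCon.prodCon_top_le_prodCon_top_iff.1 hprod.ge)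
  have hθη : θ ≤ η :=
    calc θ ≤ η ⊔ θ := le_sup_right
      _ = SCon.prodCon ψ ⊤ := hψ
      _ = η := by rw [hα ψ hψα]
  exact le_bot_iff.1 (hθ ▸ le_inf le_rfl (hθη.trans hηα))
end

section
/- Suppose f: B → ∏_{i=1}^n B_i is a product-essential embedding in a congruence modular variety, and θ is a congruence on ∏ B_i whose restriction to (the image of) B is 0_B. Then θ is a central congruence on ∏ B_i. -/
/-!
In a product with modular congruence lattice, the shifting lemma shows that `θ` induces a
congruence `slice θ i` on each factor `Bᵢ` (pairs that become `θ`-related when put into the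
`i`-th coordinate of an arbitrary tuple), and the product of these slices lies below `θ`. As `θ`
restricts trivially to `B`, so does this product, and product-essentiality kills every slice.
Then `θ` meets trivially each congruence `eqOff i` "equal off the `i`-th coordinate", and the term
condition `C(θ, 1; 0)` follows by changing the second block of arguments of a term one
coordinate at a time: every step is `θ`-related and changes a single coordinate, hence is trivial.
-/

theorem Fin.comp_append {α β : Type*} {m n : ℕ} (g : α → β) (a : Fin m → α) (u : Fin n → α) :
    g ∘ Fin.append a u = Fin.append (g ∘ a) (g ∘ u) := by
  funext l
  refine Fin.addCases (fun j => ?_) (fun j => ?_) l <;> simp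

theorem Pi.rel_of_forall_update {ι : Type*} [Fintype ι] [DecidableEq ι] {β : ι → Type*}
    {R : (∀ i, β i) → (∀ i, β i) → Prop} (hrefl : ∀ x, R x x)
    (htrans : ∀ {x y z}, R x y → R y z → R x z) {x y : ∀ i, β i}
    (hstep : ∀ i w, R (Function.update w i (x i)) (Function.update w i (y i))) : R x y := by
  suffices h : ∀ s : Finset ι, R x (s.piecewise y x) by simpa using h Finset.univ
  intro s
  induction s using Finset.induction_on with
  | empty => simpa using hrefl x
  | insert i s hi ih =>
    refine htrans ih ?_
    rw [Finset.piecewise_insert]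
    convert hstep i (s.piecewise y x)
    exact (Function.update_eq_self_iff.mpr (Finset.piecewise_eq_of_notMem _ _ _ hi).symm).symm

namespace STerm

variable {S : Signature} {ι : Type} {Bi : ι → SAlgebra S}

theorem eval_pi_apply {N : ℕ} (t : STerm S N) (w : Fin N → (SAlgebra.pi Bi).carrier) (j : ι) :
    t.eval (SAlgebra.pi Bi) w j = t.eval (Bi j) fun l => w l j := by
  induction t with
  | var l => rfl
  | app o ts ih => exact congrArg ((Bi j).interp o) (funext ih)

theorem eval_pi_append_apply {N M : ℕ} (t : STerm S (N + M))
    (a : Fin N → (SAlgebra.pi Bi).carrier) (u : Fin M → (SAlgebra.pi Bi).carrier) (j : ι) :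
    t.eval (SAlgebra.pi Bi) (Fin.append a u) j =
      t.eval (Bi j) (Fin.append (fun l => a l j) (fun l => u l j)) := by
  rw [eval_pi_apply]
  exact congrArg _ (Fin.comp_append (fun x : (SAlgebra.pi Bi).carrier => x j) a u)

end STerm

namespace SCon

variable {S : Signature} {A : SAlgebra S}

theorem bot_r_iff {x y : A.carrier} : (⊥ : SCon A).r x y ↔ x = y := by
  let eqCon : SCon A := ⟨Eq, ⟨fun _ => rfl, Eq.symm, Eq.trans⟩, fun _ _ _ h => by rw [funext h]⟩
  exact ⟨fun h => (bot_le : ⊥ ≤ eqCon) x y h, fun h => h ▸ (⊥ : SCon A).iseqv.refl x⟩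

theorem inf_r_iff {γ δ : SCon A} {x y : A.carrier} :
    (γ ⊓ δ).r x y ↔ γ.r x y ∧ δ.r x y := by
  refine ⟨fun h => ⟨(inf_le_left : γ ⊓ δ ≤ γ) x y h, (inf_le_right : γ ⊓ δ ≤ δ) x y h⟩, ?_⟩
  rintro ⟨hγ, hδ⟩ c (rfl | rfl)
  exacts [hγ, hδ]

theorem eq_bot_iff_forall_r {θ : SCon A} : θ = ⊥ ↔ ∀ x y, θ.r x y → x = y :=
  ⟨fun h _ _ hxy => bot_r_iff.mp (h ▸ hxy),
    fun h => le_bot_iff.mp fun x y hxy => bot_r_iff.mpr (h x y hxy)⟩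

theorem rel_eval (θ : SCon A) {N : ℕ} :
    ∀ (t : STerm S N) (x y : Fin N → A.carrier),
      (∀ l, θ.r (x l) (y l)) → θ.r (t.eval A x) (t.eval A y)
  | .var l, _, _, h => h l
  | .app o ts, x, y, h => θ.compat o _ _ fun j => rel_eval θ (ts j) x y h

theorem rel_eval_append_left (θ : SCon A) {N M : ℕ} (t : STerm S (N + M))
    {a b : Fin N → A.carrier} (u : Fin M → A.carrier) (hab : ∀ l, θ.r (a l) (b l)) :
    θ.r (t.eval A (Fin.append a u)) (t.eval A (Fin.append b u)) :=
  rel_eval θ t _ _ fun l =>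
    Fin.addCases (motive := fun l => θ.r (Fin.append a u l) (Fin.append b u l))
      (fun j => by simpa using hab j) (fun j => by simpa using θ.iseqv.refl (u j)) l

theorem shifting [IsModularLattice (SCon A)] {α β θ : SCon A} (hαβ : α ⊓ β ≤ θ)
    {a b c d : A.carrier} (hab : β.r a b) (hcd : β.r c d) (hac : α.r a c) (hbd : α.r b d)
    (hθ : θ.r a b) : θ.r c d := by
  set γ := β ⊓ θ ⊔ α
  have hγ : γ.r c d := γ.iseqv.trans ((le_sup_right : α ≤ γ) _ _ (α.iseqv.symm hac))
    (γ.iseqv.trans ((le_sup_left : β ⊓ θ ≤ γ) _ _ (inf_r_iff.mpr ⟨hab, hθ⟩))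
      ((le_sup_right : α ≤ γ) _ _ hbd))
  have hmod : γ ⊓ β = β ⊓ θ ⊔ α ⊓ β := sup_inf_assoc_of_le α inf_le_left
  have hγβ : (γ ⊓ β).r c d := inf_r_iff.mpr ⟨hγ, hcd⟩
  rw [hmod] at hγβ
  exact (sup_le inf_le_right hαβ : β ⊓ θ ⊔ α ⊓ β ≤ θ) c d hγβ

end SCon

theorem conCommutator_eq_bot_of_centralizes {S : Signature} {A : SAlgebra S} {α β : SCon A}
    (h : Centralizes A α β ⊥) : conCommutator A α β = ⊥ :=
  le_bot_iff.mp (sInf_le h)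

namespace SCon

variable {S : Signature} {ι : Type} {Bi : ι → SAlgebra S}

def eqOff (Bi : ι → SAlgebra S) (i : ι) : SCon (SAlgebra.pi Bi) where
  r x y := ∀ j, j ≠ i → x j = y j
  iseqv := ⟨fun _ _ _ => rfl, fun h j hj => (h j hj).symm,
    fun h h' j hj => (h j hj).trans (h' j hj)⟩
  compat o _ _ h j hj := congrArg ((Bi j).interp o) (funext fun k => h k j hj)

theorem rel_of_rel_of_eqOff [IsModularLattice (SCon (SAlgebra.pi Bi))]
    (θ : SCon (SAlgebra.pi Bi)) {i : ι} {p q c d : ∀ j, (Bi j).carrier}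
    (hpq : (eqOff Bi i).r p q) (hcd : (eqOff Bi i).r c d) (hpc : p i = c i) (hqd : q i = d i)
    (h : θ.r p q) : θ.r c d := by
  refine shifting (α := comap (SHom.proj Bi i) ⊥) (fun x y hxy => ?_) hpq hcd
    (bot_r_iff.mpr hpc) (bot_r_iff.mpr hqd) h
  obtain ⟨hi, hoff⟩ := inf_r_iff.mp hxy
  have hxy : x = y := funext fun j => by
    by_cases hj : j = i
    · exact hj ▸ bot_r_iff.mp hi
    · exact hoff j hj
  exact hxy ▸ θ.iseqv.refl x

variable [DecidableEq ι]

theorem eqOff_update (i : ι) (w : ∀ j, (Bi j).carrier) (a b : (Bi i).carrier) :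
    (eqOff Bi i).r (Function.update w i a) (Function.update w i b) := fun j hj => by
  rw [Function.update_of_ne hj, Function.update_of_ne hj]

/-- By the shifting lemma this relation does not depend on the tuple `w`, which is what makes it
compatible with the operations. -/
def slice [IsModularLattice (SCon (SAlgebra.pi Bi))] (θ : SCon (SAlgebra.pi Bi)) (i : ι) :
    SCon (Bi i) where
  r x y := ∀ w, θ.r (Function.update w i x) (Function.update w i y)
  iseqv := ⟨fun _ w => θ.iseqv.refl _, fun h w => θ.iseqv.symm (h w),
    fun h1 h2 w => θ.iseqv.trans (h1 w) (h2 w)⟩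
  compat o _ _ h w := by
    have hinterp := θ.compat o _ _ fun k => h k w
    refine rel_of_rel_of_eqOff θ (fun j hj => ?_) (eqOff_update i w _ _) ?_ ?_ hinterp
    · show (Bi j).interp o _ = (Bi j).interp o _
      simp only [Function.update_of_ne hj]
    all_goals
      show (Bi i).interp o _ = _
      simp only [Function.update_self]

theorem slice_rel_of_rel [IsModularLattice (SCon (SAlgebra.pi Bi))]
    {θ : SCon (SAlgebra.pi Bi)} {i : ι} {p q : ∀ j, (Bi j).carrier} (hθ : θ.r p q)
    (hpq : (eqOff Bi i).r p q) : (slice θ i).r (p i) (q i) := fun w =>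
  rel_of_rel_of_eqOff θ hpq (eqOff_update i w _ _) (Function.update_self i _ w).symm
    (Function.update_self i _ w).symm hθ

theorem inf_eqOff_eq_bot_of_slice_eq_bot [IsModularLattice (SCon (SAlgebra.pi Bi))]
    {θ : SCon (SAlgebra.pi Bi)} {i : ι} (h : slice θ i = ⊥) : θ ⊓ eqOff Bi i = ⊥ := by
  refine eq_bot_iff_forall_r.mpr fun p q hpq => ?_
  obtain ⟨hθ, hoff⟩ := inf_r_iff.mp hpq
  have hi : p i = q i := bot_r_iff.mp (h ▸ slice_rel_of_rel hθ hoff)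
  funext j
  by_cases hj : j = i
  · exact hj ▸ hi
  · exact hoff j hj

theorem piCon_slice_le [Fintype ι] [IsModularLattice (SCon (SAlgebra.pi Bi))]
    (θ : SCon (SAlgebra.pi Bi)) : piCon (slice θ) ≤ θ := fun _ _ h =>
  Pi.rel_of_forall_update θ.iseqv.refl θ.iseqv.trans fun i w => h i w

theorem centralizes_top_bot_of_inf_eqOff_eq_bot [Fintype ι] {θ : SCon (SAlgebra.pi Bi)}
    (h : ∀ i, θ ⊓ eqOff Bi i = ⊥) : Centralizes (SAlgebra.pi Bi) θ ⊤ ⊥ := by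
  intro N M t a b u v hab _ hau
  rw [bot_r_iff] at hau ⊢
  -- `p` lists the `M` arguments factor by factor, so that they can be changed from `u` to `v`
  -- one factor at a time; each such step is `θ`-related since the `a`-side values agree.
  let ev (c : Fin N → (SAlgebra.pi Bi).carrier) (p : ∀ j, Fin M → (Bi j).carrier) :
      (SAlgebra.pi Bi).carrier :=
    t.eval (SAlgebra.pi Bi) (Fin.append c fun l j => p j l)
  have ev_apply : ∀ c p j, ev c p j = t.eval (Bi j) (Fin.append (fun l => c l j) (p j)) :=
    fun c p j => t.eval_pi_append_apply _ _ j
  refine Pi.rel_of_forall_update (R := fun p q => ev b p = ev b q) (fun _ => rfl) Eq.trans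
    (x := fun j l => u l j) (y := fun j l => v l j) fun i w => ?_
  set p := Function.update w i fun l => u l i
  set q := Function.update w i fun l => v l i
  have hoff : (eqOff Bi i).r (ev b p) (ev b q) := fun j hj => by
    simp only [ev_apply, p, q, Function.update_of_ne hj]
  have ha : ev a p = ev a q := funext fun j => by
    by_cases hj : j = i
    · subst hj
      simp only [ev_apply, p, q, Function.update_self]
      simpa only [STerm.eval_pi_append_apply] using congrFun hau j
    · simp only [ev_apply, p, q, Function.update_of_ne hj]
  have hbp : θ.r (ev b p) (ev a p) := rel_eval_append_left θ t _ fun l => θ.iseqv.symm (hab l)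
  have haq : θ.r (ev a q) (ev b q) := rel_eval_append_left θ t _ hab
  have hθ : θ.r (ev b p) (ev b q) := θ.iseqv.trans hbp (ha ▸ haq)
  exact eq_bot_iff_forall_r.mp (h i) _ _ (inf_r_iff.mpr ⟨hθ, hoff⟩)

end SCon

theorem product_essential_restriction_central_general {S : Signature}
    (V : SAlgebra S → Prop) (hV : IsCongruenceModularVariety V)
    (n : ℕ) (B : SAlgebra S) (Bi : Fin n → SAlgebra S)
    (hBi : ∀ i, V (Bi i))
    (f : SHom B (SAlgebra.pi Bi))
    (hpe : ∀ φ : ∀ i, SCon (Bi i), SCon.comap f (SCon.piCon φ) = ⊥ → ∀ i, φ i = ⊥)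
    (θ : SCon (SAlgebra.pi Bi)) (hres : SCon.comap f θ = ⊥) :
    conCommutator (SAlgebra.pi Bi) θ ⊤ = ⊥ := by
  have : IsModularLattice (SCon (SAlgebra.pi Bi)) := hV.2 _ (hV.1.2.2 (Fin n) Bi hBi)
  have hslice_res : SCon.comap f (SCon.piCon (SCon.slice θ)) = ⊥ :=
    le_bot_iff.mp fun x y hxy => hres ▸ SCon.piCon_slice_le θ _ _ hxy
  have hslice : ∀ i, SCon.slice θ i = ⊥ := hpe _ hslice_res
  exact conCommutator_eq_bot_of_centralizes <| SCon.centralizes_top_bot_of_inf_eqOff_eq_bot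
    fun i => SCon.inf_eqOff_eq_bot_of_slice_eq_bot (hslice i)

/-- If `f : B → ∏ Bᵢ` is a product-essential embedding in a congruence modular variety
and `θ` is a congruence on `∏ Bᵢ` restricting trivially to `B`, then `θ` is central. -/
theorem product_essential_restriction_central {S : Signature}
    (V : SAlgebra S → Prop) (hV : IsCongruenceModularVariety V)
    (n : ℕ) (B : SAlgebra S) (Bi : Fin n → SAlgebra S)
    (hB : V B) (hBi : ∀ i, V (Bi i))
    (f : SHom B (SAlgebra.pi Bi)) (hinj : Function.Injective f.toFun)
    (hpe : ∀ φ : ∀ i, SCon (Bi i), SCon.comap f (SCon.piCon φ) = ⊥ → ∀ i, φ i = ⊥)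
    (θ : SCon (SAlgebra.pi Bi)) (hres : SCon.comap f θ = ⊥) :
    conCommutator (SAlgebra.pi Bi) θ ⊤ = ⊥ :=
  product_essential_restriction_central_general V hV n B Bi hBi f hpe θ hres
end
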